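/- Let R be a reduced local Cohen–Macaulay ring and M a finitely generated R-module whose trace ideal J = tr_R(M) is regular. Then J** = tr_R(End_R(J)); in particular, the reflexive hull (double dual) of a regular trace ideal is again a trace ideal. -/

import Mathlib

open IsLocalRing

noncomputable def traceIdeal (R : Type*) [CommRing R] (M : Type*) [AddCommGroup M]
    [Module R M] : Ideal R :=
  ⨆ f : M →ₗ[R] R, LinearMap.range f

def IsCohenMacaulayLocalRing (R : Type*) [CommRing R] [IsLocalRing R] : Prop :=
  ∃ rs : List R, (∀ r ∈ rs, r ∈ maximalIdeal R) ∧ RingTheory.Sequence.IsRegular R rs ∧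
    ringKrullDim R = rs.length

noncomputable def moduleLength (R M : Type*) [CommRing R] [AddCommGroup M] [Module R M] :
    WithBot ℕ∞ :=
  Order.krullDim (Submodule R M)

noncomputable def conductorIdeal (R : Type*) [CommRing R] : Ideal R :=
  Submodule.colon (1 : Submodule R (FractionRing R))
    (Subalgebra.toSubmodule (integralClosure R (FractionRing R)))

def idealIntegralClosure {R : Type*} [CommRing R] (I : Ideal R) : Set R :=
  {x | ∃ n : ℕ, 0 < n ∧ ∃ a : ℕ → R, (∀ i ∈ Finset.Icc 1 n, a i ∈ I ^ i) ∧
    x ^ n + ∑ i ∈ Finset.Icc 1 n, a i * x ^ (n - i) = 0}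

def HasMinimalMultiplicity (R : Type*) [CommRing R] [IsLocalRing R] : Prop :=
  ∃ x : R, (x ∈ maximalIdeal R ∧
      ∃ n : ℕ, maximalIdeal R ^ (n + 1) = Ideal.span {x} * maximalIdeal R ^ n) ∧
    maximalIdeal R ^ 2 = Ideal.span {x} * maximalIdeal R

/-!
Let `K` be the total quotient ring and `J'` the image of `J = tr M` in `K`. An `R`-linear map
between submodules of `K` is multiplication by an element of `K` (clear denominators), so
`Hom(T, T') ≅ T' : T` as soon as `T` contains a unit of `K`. As `J` is regular,
`End(J) ≅ J' : J'`, and this equals `R : J'` because `J` is a trace ideal: if `x J' ⊆ R`, then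
`x · -` is a linear form on `J`, so `x J' ⊆ tr J = J`. Finally `S = R : J'` is a ring containing
`1`, and for such a ring every linear form is multiplication by its value at `1`, whence
`tr S = R : S = R : (R : J') = J**`.
-/

section TraceIdeal

variable {R : Type*} [CommRing R] {M : Type*} [AddCommGroup M] [Module R M]

theorem apply_mem_traceIdeal (f : M →ₗ[R] R) (m : M) : f m ∈ traceIdeal R M :=
  le_iSup (fun g : M →ₗ[R] R => LinearMap.range g) f ⟨m, rfl⟩

theorem traceIdeal_congr {N : Type*} [AddCommGroup N] [Module R N] (e : M ≃ₗ[R] N) :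
    traceIdeal R M = traceIdeal R N := by
  apply le_antisymm <;> refine iSup_le fun f => ?_ <;> rintro _ ⟨x, rfl⟩
  · simpa using apply_mem_traceIdeal (f ∘ₗ e.symm.toLinearMap) (e x)
  · simpa using apply_mem_traceIdeal (f ∘ₗ e.toLinearMap) (e.symm x)

theorem le_traceIdeal (I : Ideal R) : I ≤ traceIdeal R I :=
  fun x hx => apply_mem_traceIdeal I.subtype ⟨x, hx⟩

theorem traceIdeal_traceIdeal : traceIdeal R (traceIdeal R M) = traceIdeal R M := by
  set J := traceIdeal R M
  refine le_antisymm (iSup_le fun g => ?_) (le_traceIdeal J)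
  -- `g` maps each `f(M) ⊆ J` into `J`, since `g ∘ f` is a linear form on `M`
  have hJ : J ≤ (Submodule.comap g J).map J.subtype := iSup_le fun f => by
    rintro _ ⟨m, rfl⟩
    exact ⟨⟨f m, apply_mem_traceIdeal f m⟩,
      apply_mem_traceIdeal (g ∘ₗ f.codRestrict J (apply_mem_traceIdeal f)) m, rfl⟩
  rintro _ ⟨j, rfl⟩
  obtain ⟨j', hj', hj'j⟩ := hJ j.2
  rwa [Subtype.ext hj'j] at hj'

end TraceIdeal

namespace Submodule

theorem div_self_mul_div_self_le {R A : Type*} [CommSemiring R] [CommSemiring A] [Algebra R A]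
    (I : Submodule R A) : I / I * (I / I) ≤ I / I := by
  have hdiv : I / I * I ≤ I := le_div_iff_mul_le.mp le_rfl
  rw [le_div_iff_mul_le, mul_assoc]
  exact (mul_le_mul_right hdiv _).trans hdiv

variable {R K : Type*} [CommRing R] [CommRing K] [Algebra R K]

variable (T T' : Submodule R K) in
def homOfDiv : ↥(T' / T) →ₗ[R] T →ₗ[R] T' :=
  LinearMap.mk₂ R (fun x t => ⟨x * t, mem_div_iff_forall_mul_mem.mp x.2 t t.2⟩)
    (fun _ _ _ => Subtype.ext (add_mul _ _ _)) (fun _ _ _ => Subtype.ext (smul_mul_assoc _ _ _))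
    (fun _ _ _ => Subtype.ext (mul_add _ _ _)) (fun _ _ _ => Subtype.ext (mul_smul_comm _ _ _))

@[simp]
theorem coe_homOfDiv_apply {T T' : Submodule R K} (x : ↥(T' / T)) (t : T) :
    (homOfDiv T T' x t : K) = x * t :=
  rfl

variable [IsFractionRing R K] {T T' : Submodule R K}

theorem linearMap_apply_mul_comm (f : T →ₗ[R] K) (s t : T) : f s * t = f t * s := by
  obtain ⟨⟨a, b⟩, hab⟩ := IsLocalization.surj (nonZeroDivisors R) (s : K)
  obtain ⟨⟨c, d⟩, hcd⟩ := IsLocalization.surj (nonZeroDivisors R) (t : K)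
  have hcross : (c * b) • s = (a * d) • t := by
    ext
    simp only [coe_smul, Algebra.smul_def, map_mul, ← hab, ← hcd]
    ring
  have hf := congrArg f hcross
  simp only [map_smul, Algebra.smul_def, map_mul] at hf
  apply (IsLocalization.map_units K (b * d)).mul_left_cancel
  rw [Submonoid.coe_mul, map_mul]
  linear_combination (algebraMap R K b * f s) * hcd - (algebraMap R K d * f t) * hab + hf

theorem homOfDiv_bijective {t₀ : K} (ht₀ : t₀ ∈ T) (hu : IsUnit t₀) :
    Function.Bijective (homOfDiv T T') := by
  refine ⟨fun x y hxy => Subtype.ext (hu.mul_right_cancel ?_), fun f => ?_⟩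
  · simpa using congrArg Subtype.val (LinearMap.congr_fun hxy ⟨t₀, ht₀⟩)
  · have hf (t : T) : (f ⟨t₀, ht₀⟩ : K) * ↑hu.unit⁻¹ * t = f t := by
      have hcomm := linearMap_apply_mul_comm (T'.subtype ∘ₗ f) ⟨t₀, ht₀⟩ t
      simp only [LinearMap.comp_apply, subtype_apply] at hcomm
      rw [mul_right_comm, hcomm, mul_assoc, IsUnit.mul_val_inv, mul_one]
    refine ⟨⟨(f ⟨t₀, ht₀⟩ : K) * ↑hu.unit⁻¹, mem_div_iff_forall_mul_mem.mpr fun t ht => ?_⟩, ?_⟩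
    · rw [hf ⟨t, ht⟩]
      exact (f ⟨t, ht⟩).2
    · ext t
      exact hf t

noncomputable def divEquivHom {t₀ : K} (ht₀ : t₀ ∈ T) (hu : IsUnit t₀) :
    ↥(T' / T) ≃ₗ[R] (T →ₗ[R] T') :=
  LinearEquiv.ofBijective _ (homOfDiv_bijective ht₀ hu)

variable (R K) in
noncomputable def oneEquiv : R ≃ₗ[R] ↥(1 : Submodule R K) :=
  (LinearEquiv.ofInjective _ (IsFractionRing.injective R K)).trans
    (LinearEquiv.ofEq _ _ one_eq_range.symm)

@[simp]
theorem coe_oneEquiv_apply (r : R) : (oneEquiv R K r : K) = algebraMap R K r :=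
  rfl

variable (T) in
noncomputable def dualOfDiv (x : ↥(1 / T)) : T →ₗ[R] R :=
  (oneEquiv R K).symm.toLinearMap ∘ₗ homOfDiv T 1 x

theorem algebraMap_dualOfDiv_apply (x : ↥(1 / T)) (t : T) :
    algebraMap R K (dualOfDiv T x t) = x * t := by
  rw [← coe_oneEquiv_apply, dualOfDiv, LinearMap.comp_apply, LinearEquiv.coe_coe,
    LinearEquiv.apply_symm_apply, coe_homOfDiv_apply]

theorem map_traceIdeal_eq_one_div (h1 : 1 ∈ T) (hmul : T * T ≤ T) :
    map (Algebra.linearMap R K) (traceIdeal R T) = 1 / T := by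
  refine le_antisymm ?_ fun x hx => ⟨_, apply_mem_traceIdeal (dualOfDiv T ⟨x, hx⟩) ⟨1, h1⟩, ?_⟩
  · rw [traceIdeal, map_iSup]
    refine iSup_le fun f => ?_
    rintro _ ⟨_, ⟨s, rfl⟩, rfl⟩
    refine mem_div_iff_forall_mul_mem.mpr fun y hy => ?_
    set g := Algebra.linearMap R K ∘ₗ f
    have hg (t : T) : g t = g ⟨1, h1⟩ * t := by
      simpa using linearMap_apply_mul_comm g t ⟨1, h1⟩
    have hsy : g s * y = g ⟨s * y, hmul (mul_mem_mul s.2 hy)⟩ := by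
      rw [hg s, hg ⟨s * y, _⟩, mul_assoc]
    show g s * y ∈ 1
    rw [hsy]
    exact mem_one.mpr ⟨_, rfl⟩
  · rw [Algebra.linearMap_apply, algebraMap_dualOfDiv_apply, mul_one]

theorem map_div_map_eq_one_div_of_traceIdeal_le (I : Ideal R) (hI : traceIdeal R I ≤ I) :
    map (Algebra.linearMap R K) I / map (Algebra.linearMap R K) I =
      1 / map (Algebra.linearMap R K) I := by
  set I' := map (Algebra.linearMap R K) I
  have hI' : I' ≤ 1 := one_eq_range (R := R) (A := K) ▸ LinearMap.map_le_range
  refine le_antisymm (le_div_iff.mpr fun x hx z hz => hI' (mem_div_iff_forall_mul_mem.mp hx z hz))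
    fun x hx => mem_div_iff_forall_mul_mem.mpr ?_
  rintro _ ⟨j, hj, rfl⟩
  let e := equivMapOfInjective (Algebra.linearMap R K) (IsFractionRing.injective R K) I
  refine ⟨_, hI (apply_mem_traceIdeal (dualOfDiv I' ⟨x, hx⟩ ∘ₗ e.toLinearMap) ⟨j, hj⟩), ?_⟩
  exact algebraMap_dualOfDiv_apply ⟨x, hx⟩ (e ⟨j, hj⟩)

variable (K) in
noncomputable def endEquivDivSelf (I : Ideal R) {j₀ : R} (hj₀ : j₀ ∈ I)
    (hreg : j₀ ∈ nonZeroDivisors R) :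
    Module.End R I ≃ₗ[R] ↥(map (Algebra.linearMap R K) I / map (Algebra.linearMap R K) I) :=
  (equivMapOfInjective (Algebra.linearMap R K) (IsFractionRing.injective R K) I).conj.trans
    (divEquivHom (mem_map_of_mem (f := Algebra.linearMap R K) hj₀)
      (IsLocalization.map_units K ⟨j₀, hreg⟩)).symm

end Submodule

theorem double_dual_of_trace_eq_trace_of_endomorphisms_general
    (R : Type*) [CommRing R]
    (M : Type*) [AddCommGroup M] [Module R M]
    (hreg : ∃ x ∈ traceIdeal R M, x ∈ nonZeroDivisors R) :
    (1 : Submodule R (FractionRing R)) /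
        ((1 : Submodule R (FractionRing R)) /
          Submodule.map (Algebra.linearMap R (FractionRing R)) (traceIdeal R M)) =
      Submodule.map (Algebra.linearMap R (FractionRing R))
        (traceIdeal R (Module.End R ↥(traceIdeal R M))) ∧
    traceIdeal R ↥(traceIdeal R (Module.End R ↥(traceIdeal R M))) =
      traceIdeal R (Module.End R ↥(traceIdeal R M)) := by
  obtain ⟨j₀, hj₀, hj₀_reg⟩ := hreg
  set J' := Submodule.map (Algebra.linearMap R (FractionRing R)) (traceIdeal R M)
  have hdiv : J' / J' = 1 / J' :=
    Submodule.map_div_map_eq_one_div_of_traceIdeal_le _ traceIdeal_traceIdeal.le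
  have hEnd : Module.End R (traceIdeal R M) ≃ₗ[R] ↥(1 / J') :=
    (Submodule.endEquivDivSelf _ _ hj₀ hj₀_reg).trans (LinearEquiv.ofEq _ _ hdiv)
  refine ⟨?_, traceIdeal_traceIdeal⟩
  rw [traceIdeal_congr hEnd, Submodule.map_traceIdeal_eq_one_div
    (hdiv ▸ Submodule.one_mem_div.mpr le_rfl) (hdiv ▸ Submodule.div_self_mul_div_self_le J')]

set_option synthInstance.maxHeartbeats 800000 in
/-- Let `R` be a reduced local Cohen–Macaulay ring and `M` a finitely
generated `R`-module whose trace ideal `J = tr_R(M)` is regular. Then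
`J** = tr_R(End_R(J))`, where `J** = R : (R : J)` is computed in the total quotient ring;
in particular, the reflexive hull of a regular trace ideal is again a trace ideal. -/
theorem double_dual_of_trace_eq_trace_of_endomorphisms
    (R : Type*) [CommRing R] [IsNoetherianRing R] [IsLocalRing R] [IsReduced R]
    (hCM : IsCohenMacaulayLocalRing R)
    (M : Type*) [AddCommGroup M] [Module R M] [Module.Finite R M]
    (hreg : ∃ x ∈ traceIdeal R M, x ∈ nonZeroDivisors R) :
    (1 : Submodule R (FractionRing R)) /
        ((1 : Submodule R (FractionRing R)) /
          Submodule.map (Algebra.linearMap R (FractionRing R)) (traceIdeal R M)) =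
      Submodule.map (Algebra.linearMap R (FractionRing R))
        (traceIdeal R (Module.End R ↥(traceIdeal R M))) ∧
    traceIdeal R ↥(traceIdeal R (Module.End R ↥(traceIdeal R M))) =
      traceIdeal R (Module.End R ↥(traceIdeal R M)) :=
  double_dual_of_trace_eq_trace_of_endomorphisms_general R M hreg
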